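/- arXiv:2404.04864 — 2 statements merged into one kernel-verified Lean document; each statement's English description precedes it below -/
import Mathlib

section
/- The function R(x) = I₁(x)/I₀(x) is monotonically increasing on [0, ∞). -/
/-!
With `μ` the Lebesgue measure on `(0, 2π]`, `I₀(x)` and `I₁(x)` are `(2π)⁻¹` times the moment
generating function of `cos` under `μ` and its derivative, so `I₁ / I₀` is the derivative of the
cumulant generating function `log ∫ exp (x cos θ) dμ`. Its second derivative is the variance of
`cos` under the exponentially tilted measure, hence nonnegative: the cumulant generating function
is convex and its derivative is monotone.
-/

open MeasureTheory ProbabilityTheory Real Set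

noncomputable def I0 (x : ℝ) : ℝ :=
  (2 * Real.pi)⁻¹ * ∫ θ in (0:ℝ)..(2 * Real.pi), Real.exp (x * Real.cos θ)

noncomputable def I1 (x : ℝ) : ℝ :=
  (2 * Real.pi)⁻¹ * ∫ θ in (0:ℝ)..(2 * Real.pi), Real.exp (x * Real.cos θ) * Real.cos θ

section Cgf

variable {Ω : Type*} [MeasurableSpace Ω] {X : Ω → ℝ} {μ : Measure Ω}

lemma interior_integrableExpSet_eq_univ (h : ∀ t, Integrable (fun ω ↦ exp (t * X ω)) μ) :
    interior (integrableExpSet X μ) = univ := by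
  rw [eq_univ_of_forall (s := integrableExpSet X μ) h, interior_univ]

lemma iteratedDeriv_two_cgf_nonneg {v : ℝ} (h : v ∈ interior (integrableExpSet X μ)) :
    0 ≤ iteratedDeriv 2 (cgf X μ) v := by
  rw [iteratedDeriv_two_cgf_eq_integral h]
  exact div_nonneg (integral_nonneg fun ω ↦ by positivity) mgf_nonneg

lemma monotone_deriv_cgf (h : ∀ t, Integrable (fun ω ↦ exp (t * X ω)) μ) :
    Monotone (deriv (cgf X μ)) := by
  have h_mem (v : ℝ) : v ∈ interior (integrableExpSet X μ) :=
    interior_integrableExpSet_eq_univ h ▸ mem_univ v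
  have h_deriv_deriv : deriv (deriv (cgf X μ)) = iteratedDeriv 2 (cgf X μ) := by
    rw [iteratedDeriv_succ, iteratedDeriv_one]
  refine monotone_of_deriv_nonneg (fun v ↦ (analyticAt_cgf (h_mem v)).deriv.differentiableAt)
    fun v ↦ ?_
  rw [h_deriv_deriv]
  exact iteratedDeriv_two_cgf_nonneg (h_mem v)

end Cgf

lemma integrable_exp_mul_cos (t : ℝ) :
    Integrable (fun θ ↦ exp (t * cos θ)) (volume.restrict (Ioc 0 (2 * π))) :=
  (by fun_prop : Continuous fun θ ↦ exp (t * cos θ)).integrableOn_Ioc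

lemma I1_div_I0_eq_deriv_cgf (x : ℝ) :
    I1 x / I0 x = deriv (cgf cos (volume.restrict (Ioc 0 (2 * π)))) x := by
  have h_mem : x ∈ interior (integrableExpSet cos (volume.restrict (Ioc 0 (2 * π)))) :=
    interior_integrableExpSet_eq_univ integrable_exp_mul_cos ▸ mem_univ x
  rw [deriv_cgf h_mem, I0, I1, mul_div_mul_left _ _ (by positivity), mgf,
    intervalIntegral.integral_of_le (by positivity),
    intervalIntegral.integral_of_le (by positivity)]
  simp_rw [mul_comm (exp _)]

theorem besselRatio_monotoneOn :
    MonotoneOn (fun x : ℝ => I1 x / I0 x) (Set.Ici 0) := by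
  simp_rw [I1_div_I0_eq_deriv_cgf]
  exact (monotone_deriv_cgf integrable_exp_mul_cos).monotoneOn _
end

section
/- If z follows the Rician distribution with parameter λ and noise level σ (density p(z) = (2z/σ²) exp(-(z² + |λ|²)/σ²) I₀(2z|λ|/σ²)), and κ(z) = 2z|λ|/σ², then E[z · R(κ(z))] = |λ|, where R = I₁/I₀. -/
/-!
Let `X` be a Gaussian vector in `ℝ²` with mean `(|λ|, 0)` and variance `σ²/2` in each coordinate,
so that `|X|` is Rician. At `(r cos θ, r sin θ)` the density of `X` is
`(π σ²)⁻¹ exp(-(r² + |λ|²)/σ²) exp(κ(r) cos θ)`. Integrating `r` times it over `θ` gives the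
Rician density `p(r)` (this is `I₀`), and integrating `r · r cos θ` times it gives
`r R(κ(r)) p(r)` (this is `I₁`). Hence `E[z R(κ(z))] = E[X₁] = |λ|`.
-/

open MeasureTheory

noncomputable def R (x : ℝ) : ℝ := I1 x / I0 x

noncomputable def ricianPdf (σ : ℝ) (lam : ℂ) (z : ℝ) : ℝ :=
  2 * z / σ ^ 2 * Real.exp (-(z ^ 2 + ‖lam‖ ^ 2) / σ ^ 2) *
    I0 (2 * z * ‖lam‖ / σ ^ 2)

open Real Set ProbabilityTheory
open scoped NNReal

theorem integrableOn_comp_polarCoord_symm {E : Type*} [NormedAddCommGroup E] [NormedSpace ℝ E]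
    {f : ℝ × ℝ → E} (hf : Integrable f) :
    IntegrableOn (fun p => p.1 • f (polarCoord.symm p)) polarCoord.target := by
  have h := (integrableOn_image_iff_integrableOn_abs_det_fderiv_smul volume
    polarCoord.open_target.measurableSet
    (fun p _ => (hasFDerivAt_polarCoord_symm p).hasFDerivWithinAt) polarCoord.symm.injOn f).1
  rw [polarCoord.symm_image_target_eq_source] at h
  refine (h hf.integrableOn).congr_fun (fun p hp => ?_) polarCoord.open_target.measurableSet
  simp only [det_fderivPolarCoordSymm, abs_of_pos (show 0 < p.1 from hp.1)]

theorem integral_integral_comp_polarCoord_symm {E : Type*} [NormedAddCommGroup E]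
    [NormedSpace ℝ E] {f : ℝ × ℝ → E} (hf : Integrable f) :
    ∫ r in Ioi (0 : ℝ), ∫ θ in Ioo (-π) π, r • f (r * cos θ, r * sin θ) = ∫ p, f p := by
  rw [← integral_comp_polarCoord_symm, polarCoord_target, Measure.volume_eq_prod,
    setIntegral_prod _ (integrableOn_comp_polarCoord_symm hf)]
  rfl

theorem integrable_mul_gaussianPDFReal (μ : ℝ) (v : ℝ≥0) :
    Integrable (fun x => x * gaussianPDFReal μ v x) := by
  rcases eq_or_ne v 0 with rfl | hv
  · simp
  have h := (memLp_id_gaussianReal (μ := μ) (v := v) 1).integrable le_rfl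
  rw [gaussianReal_of_var_ne_zero _ hv, integrable_withDensity_iff_integrable_smul'
    (measurable_gaussianPDF μ v) (ae_of_all _ fun _ => gaussianPDF_lt_top)] at h
  refine h.congr (ae_of_all _ fun x => ?_)
  simp [gaussianPDF, ENNReal.toReal_ofReal (gaussianPDFReal_nonneg μ v x), mul_comm]

theorem integral_mul_gaussianPDFReal (μ : ℝ) {v : ℝ≥0} (hv : v ≠ 0) :
    ∫ x, x * gaussianPDFReal μ v x = μ := by
  simpa [integral_gaussianReal_eq_integral_smul hv, mul_comm] using
    integral_id_gaussianReal (μ := μ) (v := v)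

theorem I0_pos (x : ℝ) : 0 < I0 x := by
  have hcont : Continuous fun θ => exp (x * cos θ) := by fun_prop
  exact mul_pos (by positivity) (intervalIntegral.intervalIntegral_pos_of_pos
    (hcont.intervalIntegrable _ _) (fun _ => exp_pos _) (by positivity))

theorem integral_Ioo_exp_mul_cos_mul_cos (x : ℝ) :
    ∫ θ in Ioo (-π) π, exp (x * cos θ) * cos θ = 2 * π * I1 x := by
  have hper : Function.Periodic (fun θ => exp (x * cos θ) * cos θ) (2 * π) := fun θ => by
    simp only [cos_add_two_pi]
  have hshift := hper.intervalIntegral_add_eq (-π) 0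
  rw [show -π + 2 * π = π by ring, zero_add] at hshift
  rw [← integral_Ioc_eq_integral_Ioo, ← intervalIntegral.integral_of_le (by linarith [pi_pos]),
    hshift, I1]
  field_simp

theorem gaussianPDFReal_mul_gaussianPDFReal_polar (a : ℝ) (v : ℝ≥0) (r θ : ℝ) :
    gaussianPDFReal a v (r * cos θ) * gaussianPDFReal 0 v (r * sin θ) =
      (2 * π * v)⁻¹ * exp (-(r ^ 2 + a ^ 2) / (2 * v)) * exp (r * a / v * cos θ) := by
  have hsqrt : (√(2 * π * v))⁻¹ * (√(2 * π * v))⁻¹ = (2 * π * v)⁻¹ := by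
    rw [← mul_inv, mul_self_sqrt (by positivity)]
  rw [gaussianPDFReal, gaussianPDFReal, mul_mul_mul_comm, hsqrt, ← exp_add, mul_assoc _ (exp _),
    ← exp_add]
  congr 2
  linear_combination (-r ^ 2 / (2 * v)) * sin_sq_add_cos_sq θ

theorem mul_R_mul_ricianPdf_eq_integral {σ : ℝ} {v : ℝ≥0} (hv : σ ^ 2 = 2 * v) (lam : ℂ)
    (z : ℝ) :
    z * R (2 * z * ‖lam‖ / σ ^ 2) * ricianPdf σ lam z =
      ∫ θ in Ioo (-π) π, z * (z * cos θ * gaussianPDFReal ‖lam‖ v (z * cos θ) *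
        gaussianPDFReal 0 v (z * sin θ)) := by
  have hintegrand : ∀ θ, z * (z * cos θ * gaussianPDFReal ‖lam‖ v (z * cos θ) *
      gaussianPDFReal 0 v (z * sin θ)) = z ^ 2 * (2 * π * v)⁻¹ *
        exp (-(z ^ 2 + ‖lam‖ ^ 2) / (2 * v)) * (exp (z * ‖lam‖ / v * cos θ) * cos θ) := by
    intro θ
    rw [mul_assoc (z * cos θ), gaussianPDFReal_mul_gaussianPDFReal_polar]
    ring
  simp only [hintegrand, integral_const_mul, integral_Ioo_exp_mul_cos_mul_cos, R, ricianPdf, hv]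
  field_simp [(I0_pos _).ne']

theorem rician_zR_mean (σ : ℝ) (hσ : 0 < σ) (lam : ℂ) :
    ∫ z in Set.Ici (0:ℝ),
        z * R (2 * z * ‖lam‖ / σ ^ 2) * ricianPdf σ lam z =
      ‖lam‖ := by
  let v : ℝ≥0 := ⟨σ ^ 2 / 2, by positivity⟩
  have hv : σ ^ 2 = 2 * v := by
    change σ ^ 2 = 2 * (σ ^ 2 / 2)
    ring
  have hv0 : v ≠ 0 := by
    rw [← NNReal.coe_ne_zero]
    exact (by positivity : (0 : ℝ) < σ ^ 2 / 2).ne'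
  let F : ℝ × ℝ → ℝ := fun q => q.1 * gaussianPDFReal ‖lam‖ v q.1 * gaussianPDFReal 0 v q.2
  have hF : Integrable F :=
    (integrable_mul_gaussianPDFReal _ _).mul_prod (integrable_gaussianPDFReal _ _)
  calc _ = ∫ z in Ioi (0 : ℝ), ∫ θ in Ioo (-π) π, z • F (z * cos θ, z * sin θ) := by
        simp only [integral_Ici_eq_integral_Ioi, mul_R_mul_ricianPdf_eq_integral hv, smul_eq_mul,
          F]
    _ = ∫ q, F q := integral_integral_comp_polarCoord_symm hF
    _ = (∫ x, x * gaussianPDFReal ‖lam‖ v x) * ∫ y, gaussianPDFReal 0 v y := by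
        rw [Measure.volume_eq_prod]
        exact integral_prod_mul (fun x => x * gaussianPDFReal ‖lam‖ v x) (gaussianPDFReal 0 v)
    _ = ‖lam‖ := by
        rw [integral_mul_gaussianPDFReal _ hv0, integral_gaussianPDFReal_eq_one _ hv0, mul_one]
end
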